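/- arXiv:0904.2141 — 3 statements merged into one kernel-verified Lean document; each statement's English description precedes it below -/
import Mathlib

section
/- There are no feasible tuples of type (n,m) if n ≡ 0 (mod 4) and m ≡ 2 (mod 4). -/
/-- The `k`-th partial alternating sum `L_{k+1} = ∑_{i=0}^{k} (-1)^i (x_i + 1)`
(0-indexed version of `L_k = ∑_{i=1}^k (-1)^{i+1}(x_i+1)`). -/
def altL {n : ℕ} (x : Fin n → ℕ) (k : Fin n) : ℤ :=
  ∑ i ∈ Finset.Iic k, (-1 : ℤ) ^ (i : ℕ) * ((x i : ℤ) + 1)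

/-- A tuple `(x₁,…,xₙ)` of nonnegative integers is feasible of type `(n,m)` if `n` is even,
`∑ xᵢ = m`, the alternating sum `∑ (-1)^{i+1} xᵢ` is divisible by `n`, and the partial
alternating sums `L₁,…,Lₙ` form a complete residue system modulo `n`. -/
def Feasible (n m : ℕ) (x : Fin n → ℕ) : Prop :=
  Even n ∧
  (∑ i, x i) = m ∧
  (n : ℤ) ∣ (∑ i : Fin n, (-1 : ℤ) ^ (i : ℕ) * (x i : ℤ)) ∧
  Function.Injective fun k : Fin n => (altL x k : ZMod n)

/-!
Since the `L_k` run through all residues modulo the even number `n`, their sum is congruent to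
`0 + 1 + ⋯ + (n-1)` modulo 2. Exchanging the order of summation, `∑ L_k ≡ ∑ i (x_i + 1)` modulo 2
(0-indexed), so `∑ i x_i` is even. As `1 - (-1)^i ≡ 2 i` modulo 4, the difference between `m` and
the alternating sum is `≡ 2 ∑ i x_i ≡ 0` modulo 4, while the alternating sum is divisible by `n`,
hence by 4. Thus `m ≡ 0` modulo 4.
-/

open Finset

theorem ZMod.bijective_natCast_fin (n : ℕ) [NeZero n] :
    Function.Bijective fun i : Fin n => ((i : ℕ) : ZMod n) := by
  refine (Fintype.bijective_iff_injective_and_card _).2 ⟨fun a b hab => ?_, by simp⟩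
  have := (ZMod.natCast_eq_natCast_iff' a b n).1 hab
  rw [Nat.mod_eq_of_lt a.2, Nat.mod_eq_of_lt b.2] at this
  exact Fin.ext this

theorem ZMod.sum_intCast_eq_sum_fin_of_injective {n d : ℕ} [NeZero n] (hd : d ∣ n)
    {f : Fin n → ℤ} (hf : Function.Injective fun k => (f k : ZMod n)) :
    ∑ k, (f k : ZMod d) = ∑ i : Fin n, ((i : ℕ) : ZMod d) := by
  have sum_cast_comp {g : Fin n → ZMod n} (hg : Function.Bijective g) :
      ∑ k, (cast (g k) : ZMod d) = ∑ z, cast z :=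
    Fintype.sum_bijective g hg _ _ fun _ => rfl
  calc ∑ k, (f k : ZMod d) = ∑ k, (cast (f k : ZMod n) : ZMod d) := by
        simp only [ZMod.cast_intCast hd]
    _ = ∑ z, cast z :=
        sum_cast_comp ((Fintype.bijective_iff_injective_and_card _).2 ⟨hf, by simp⟩)
    _ = ∑ i : Fin n, (cast ((i : ℕ) : ZMod n) : ZMod d) :=
        (sum_cast_comp (ZMod.bijective_natCast_fin n)).symm
    _ = ∑ i : Fin n, ((i : ℕ) : ZMod d) := by simp only [ZMod.cast_natCast hd]

theorem sum_altL {n : ℕ} (x : Fin n → ℕ) :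
    ∑ k, altL x k = ∑ i : Fin n, ((n : ℤ) - i) * ((-1) ^ (i : ℕ) * ((x i : ℤ) + 1)) := by
  simp only [altL]
  rw [sum_comm' (t' := univ) (s' := Ici) (by simp)]
  refine sum_congr rfl fun i _ => ?_
  rw [sum_const, Fin.card_Ici, nsmul_eq_mul, Nat.cast_sub i.2.le]

theorem sum_altL_cast_zmod_two {n : ℕ} (hn : 2 ∣ n) (x : Fin n → ℕ) :
    ∑ k, (altL x k : ZMod 2) = ∑ i : Fin n, ((i : ℕ) : ZMod 2) * ((x i : ZMod 2) + 1) := by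
  rw [← Int.cast_sum, sum_altL]
  push_cast
  simp [(ZMod.natCast_eq_zero_iff n 2).2 hn, ZMod.neg_eq_self_mod_two]

theorem two_dvd_sum_mul_of_injective_altL {n : ℕ} [NeZero n] (hn : 2 ∣ n) {x : Fin n → ℕ}
    (hx : Function.Injective fun k => (altL x k : ZMod n)) :
    2 ∣ ∑ i : Fin n, (i : ℤ) * x i := by
  have h := ZMod.sum_intCast_eq_sum_fin_of_injective hn hx
  rw [sum_altL_cast_zmod_two hn] at h
  simp only [mul_add, mul_one, sum_add_distrib, add_eq_right] at h
  exact (ZMod.intCast_zmod_eq_zero_iff_dvd _ 2).1 (by push_cast; exact h)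

theorem Int.one_sub_neg_one_pow_modEq_two_mul (i : ℕ) : 1 - (-1 : ℤ) ^ i ≡ 2 * i [ZMOD 4] := by
  rcases Nat.even_or_odd' i with ⟨j, rfl | rfl⟩ <;>
    simp [pow_succ, pow_mul, Int.ModEq] <;> omega

theorem sum_sub_alternating_sum_modEq {n : ℕ} (y : Fin n → ℤ) :
    ∑ i, y i - ∑ i : Fin n, (-1) ^ (i : ℕ) * y i ≡ 2 * ∑ i : Fin n, (i : ℤ) * y i [ZMOD 4] := by
  rw [← sum_sub_distrib, mul_sum]
  refine Int.ModEq.sum fun i _ => ?_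
  rw [← one_sub_mul, ← mul_assoc]
  exact (Int.one_sub_neg_one_pow_modEq_two_mul i).mul_right _

/-- There are no feasible tuples of type `(n,m)` if `n ≡ 0 (mod 4)` and `m ≡ 2 (mod 4)`. -/
theorem no_feasible_of_mod_four (n m : ℕ) (hn : 0 < n) (hn4 : n % 4 = 0) (hm4 : m % 4 = 2)
    (x : Fin n → ℕ) : ¬ Feasible n m x := by
  rintro ⟨-, rfl, hn_dvd, hx⟩
  have : NeZero n := ⟨hn.ne'⟩
  have h4 : (4 : ℤ) ∣ ∑ i : Fin n, (-1) ^ (i : ℕ) * (x i : ℤ) :=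
    (Int.natCast_dvd_natCast.2 (Nat.dvd_of_mod_eq_zero hn4)).trans hn_dvd
  have h2 := two_dvd_sum_mul_of_injective_altL (by omega) hx
  have hsub := sum_sub_alternating_sum_modEq fun i => (x i : ℤ)
  have hm : (∑ i, (x i : ℤ)) % 4 = 2 := by exact_mod_cast hm4
  rw [Int.ModEq] at hsub
  omega
end

section
/- Let (x₁,…,xₙ) be a feasible tuple of type (n,m), and set Lₖ = ∑_{i=1}^k (−1)^{i+1}(xᵢ+1) for k = 1,…,n. Then 4·(L₁ + L₃ + L₅ + ⋯ + L_{n−1}) ≡ m (mod n), where the sum runs over the odd indices k ≤ n−1. -/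
lemma altL_odd_step {n : ℕ} (x : Fin n → ℕ) (k : Fin n) (hk : ¬ Even (k:ℕ)) :
    altL x k = altL x ⟨(k:ℕ) - 1, lt_of_le_of_lt (Nat.sub_le _ _) k.isLt⟩ - ((x k : ℤ) + 1) := by
  have hk1 : (1:ℕ) ≤ (k:ℕ) := by
    rcases Nat.eq_zero_or_pos (k:ℕ) with h | h
    · exact absurd (h ▸ Even.zero) hk
    · exact h
  have hIio : Finset.Iio k = Finset.Iic (⟨(k:ℕ)-1, lt_of_le_of_lt (Nat.sub_le _ _) k.isLt⟩ : Fin n) := by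
    ext i
    simp only [Finset.mem_Iio, Finset.mem_Iic, Fin.lt_def, Fin.le_def]
    omega
  have hins : Finset.Iic k = insert k (Finset.Iio k) := (Finset.Iio_insert k).symm
  have hodd : ((-1:ℤ))^(k:ℕ) = -1 := Odd.neg_one_pow (Nat.not_even_iff_odd.mp hk)
  rw [altL, hins, Finset.sum_insert (by simp), hIio, hodd]
  show _ = altL x _ - _
  rw [altL]
  ring


/-- If `(x₁,…,xₙ)` is a feasible tuple of type `(n,m)`, then
`4·(L₁ + L₃ + ⋯ + L_{n−1}) ≡ m (mod n)`, the sum running over odd (1-indexed) indices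
`k ≤ n−1`, i.e. over even 0-indexed indices. -/
theorem four_mul_sum_odd_altL_cong (n m : ℕ) (x : Fin n → ℕ) (h : Feasible n m x) :
    (n : ℤ) ∣ 4 * (∑ k ∈ Finset.univ.filter (fun k : Fin n => Even (k : ℕ)), altL x k)
      - (m : ℤ) := by
  obtain ⟨hn, hm, hd, hinj⟩ := h
  rcases Nat.eq_zero_or_pos n with h0 | hpos
  · subst h0
    simp only [Finset.univ_eq_empty, Finset.sum_empty] at hm ⊢
    subst hm
    simp
  haveI : NeZero n := ⟨hpos.ne'⟩
  have hn2 : n % 2 = 0 := Nat.even_iff.mp hn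
  set se := Finset.univ.filter (fun k : Fin n => Even (k:ℕ)) with hse
  set so := Finset.univ.filter (fun k : Fin n => ¬ Even (k:ℕ)) with hso
  have hmem_se : ∀ k : Fin n, k ∈ se ↔ (k:ℕ) % 2 = 0 := by
    intro k; simp [hse, Nat.even_iff]
  have hmem_so : ∀ k : Fin n, k ∈ so ↔ (k:ℕ) % 2 = 1 := by
    intro k; simp [hso, Nat.even_iff]
  -- the succ/pred maps
  have hsucc : ∀ a : Fin n, a ∈ se → (a:ℕ) + 1 < n := by
    intro a ha; have := (hmem_se a).mp ha; have := a.isLt; omega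
  -- reindexing of the even sum
  have hprops : (∀ a ∈ se, (⟨((a:ℕ)+1) % n, Nat.mod_lt _ hpos⟩ : Fin n) ∈ so) ∧
      (∀ a ∈ so, (⟨(a:ℕ)-1, lt_of_le_of_lt (Nat.sub_le _ _) a.isLt⟩ : Fin n) ∈ se) ∧
      (∀ a ∈ se, (⟨((⟨((a:ℕ)+1) % n, Nat.mod_lt _ hpos⟩ : Fin n):ℕ)-1,
        lt_of_le_of_lt (Nat.sub_le _ _) (Nat.mod_lt _ hpos)⟩ : Fin n) = a) ∧
      (∀ a ∈ so, (⟨(((⟨(a:ℕ)-1, lt_of_le_of_lt (Nat.sub_le _ _) a.isLt⟩ : Fin n):ℕ)+1) % n,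
        Nat.mod_lt _ hpos⟩ : Fin n) = a) := by
    refine ⟨?_, ?_, ?_, ?_⟩
    · intro a ha
      have h1 := (hmem_se a).mp ha
      have h2 := hsucc a ha
      rw [hmem_so]
      simp only [Nat.mod_eq_of_lt h2]
      omega
    · intro a ha
      have h1 := (hmem_so a).mp ha
      rw [hmem_se]
      simp only
      omega
    · intro a ha
      have h2 := hsucc a ha
      apply Fin.ext
      simp only [Nat.mod_eq_of_lt h2]
      omega
    · intro a ha
      have h1 := (hmem_so a).mp ha
      have h3 := a.isLt
      apply Fin.ext
      simp only
      rw [Nat.mod_eq_of_lt (by omega)]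
      omega
  obtain ⟨hp1, hp2, hp3, hp4⟩ := hprops
  have hre : ∑ k ∈ se, altL x k
      = ∑ k ∈ so, altL x ⟨(k:ℕ) - 1, lt_of_le_of_lt (Nat.sub_le _ _) k.isLt⟩ := by
    refine Finset.sum_nbij' (fun a => (⟨((a:ℕ)+1) % n, Nat.mod_lt _ hpos⟩ : Fin n))
      (fun a => ⟨(a:ℕ)-1, lt_of_le_of_lt (Nat.sub_le _ _) a.isLt⟩) hp1 hp2 hp3 hp4 ?_
    intro a ha
    have h2 := hsucc a ha
    congr 1
    apply Fin.ext
    simp only [Nat.mod_eq_of_lt h2]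
    omega
  have hcard : se.card = so.card :=
    Finset.card_nbij' (fun a => (⟨((a:ℕ)+1) % n, Nat.mod_lt _ hpos⟩ : Fin n))
      (fun a => ⟨(a:ℕ)-1, lt_of_le_of_lt (Nat.sub_le _ _) a.isLt⟩) hp1 hp2 hp3 hp4
  have hcard2 : se.card + so.card = n := by
    rw [hse, hso, Finset.card_filter_add_card_filter_not, Finset.card_univ,
      Fintype.card_fin]
  have hc : 2 * so.card = n := by omega
  -- difference of the two sums
  have hdiff : (∑ k ∈ se, altL x k) - (∑ k ∈ so, altL x k)
      = (∑ k ∈ so, (x k : ℤ)) + (so.card : ℤ) := by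
    rw [hre, ← Finset.sum_sub_distrib]
    have hterm : ∀ k ∈ so, altL x ⟨(k:ℕ)-1, lt_of_le_of_lt (Nat.sub_le _ _) k.isLt⟩ - altL x k
        = (x k : ℤ) + 1 := by
      intro k hk
      have hk' : ¬ Even (k:ℕ) := by rw [Nat.not_even_iff]; exact (hmem_so k).mp hk
      rw [altL_odd_step x k hk']
      ring
    rw [Finset.sum_congr rfl hterm, Finset.sum_add_distrib, Finset.sum_const,
      nsmul_eq_mul, mul_one]
  have hsum : (∑ k ∈ se, altL x k) + (∑ k ∈ so, altL x k) = ∑ k, altL x k :=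
    Finset.sum_filter_add_sum_filter_not _ _ _
  -- divisibility of 2 * total
  have hT2 : (n:ℤ) ∣ 2 * ∑ k, altL x k := by
    rw [← ZMod.intCast_zmod_eq_zero_iff_dvd]
    push_cast
    have h1 : ∑ k : Fin n, ((altL x k : ℤ) : ZMod n) = ∑ j : ZMod n, j :=
      Fintype.sum_bijective _
        ((Fintype.bijective_iff_injective_and_card _).mpr ⟨hinj, by simp⟩)
        _ _ (fun k => rfl)
    rw [h1]
    have hS : -(∑ j : ZMod n, j) = ∑ j : ZMod n, j := by
      rw [← Finset.sum_neg_distrib]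
      exact Fintype.sum_bijective Neg.neg neg_involutive.bijective _ _ (fun j => rfl)
    calc (2 : ZMod n) * ∑ j : ZMod n, j = (∑ j : ZMod n, j) + ∑ j : ZMod n, j := two_mul _
      _ = -(∑ j : ZMod n, j) + ∑ j : ZMod n, j := by rw [hS]
      _ = 0 := neg_add_cancel _
  -- alternating sum of x
  have hd' : (n:ℤ) ∣ (∑ k ∈ se, (x k:ℤ)) - (∑ k ∈ so, (x k:ℤ)) := by
    have e0 : ∑ i : Fin n, (-1:ℤ)^(i:ℕ) * (x i : ℤ)
        = (∑ k ∈ se, (x k:ℤ)) - (∑ k ∈ so, (x k:ℤ)) := by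
      rw [← Finset.sum_filter_add_sum_filter_not Finset.univ (fun k : Fin n => Even (k:ℕ))
        (fun i => (-1:ℤ)^(i:ℕ) * (x i : ℤ)), ← hse, ← hso]
      have e1 : ∑ k ∈ se, (-1:ℤ)^(k:ℕ) * (x k:ℤ) = ∑ k ∈ se, (x k:ℤ) :=
        Finset.sum_congr rfl (fun k hk => by
          rw [Even.neg_one_pow (Nat.even_iff.mpr ((hmem_se k).mp hk)), one_mul])
      have e2 : ∑ k ∈ so, (-1:ℤ)^(k:ℕ) * (x k:ℤ) = -∑ k ∈ so, (x k:ℤ) := by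
        rw [← Finset.sum_neg_distrib]
        exact Finset.sum_congr rfl (fun k hk => by
          rw [Odd.neg_one_pow (Nat.odd_iff.mpr ((hmem_so k).mp hk))]; ring)
      rw [e1, e2]; ring
    exact e0 ▸ hd
  -- total of x
  have hm' : (∑ k ∈ se, (x k:ℤ)) + (∑ k ∈ so, (x k:ℤ)) = (m:ℤ) := by
    rw [Finset.sum_filter_add_sum_filter_not Finset.univ (fun k : Fin n => Even (k:ℕ))
      (fun i => (x i : ℤ))]
    exact_mod_cast congrArg (Nat.cast : ℕ → ℤ) hm
  -- assemble
  have key : 4 * (∑ k ∈ se, altL x k) - (m:ℤ)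
      = 2 * (∑ k, altL x k) - ((∑ k ∈ se, (x k:ℤ)) - (∑ k ∈ so, (x k:ℤ))) + 2 * (so.card : ℤ) := by
    linarith [hdiff, hsum, hm']
  rw [key]
  have hcast : (2 : ℤ) * (so.card : ℤ) = (n : ℤ) := by exact_mod_cast hc
  rw [hcast]
  exact dvd_add (dvd_sub hT2 hd') dvd_rfl
end

section
/- For an even positive integer m, the number of feasible tuples of type (2,m) up to swapping the two entries equals ⌊m/4⌋ + 1; equivalently, the number of feasible tuples (x₁,x₂) of type (2,m) with x₁ ≤ x₂ is ⌊m/4⌋ + 1. -/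
lemma altL_zero (x : Fin 2 → ℕ) : altL x 0 = x 0 + 1 := by
  simp [altL, show Finset.Iic (0 : Fin 2) = {0} from by decide]

lemma altL_one (x : Fin 2 → ℕ) : altL x 1 = (x 0 + 1) - (x 1 + 1) := by
  simp [altL, show Finset.Iic (1 : Fin 2) = {0, 1} from by decide]
  ring

/-- For an even positive integer `m`, the number of feasible tuples of type `(2,m)` up to
swapping the two entries, i.e. the number of feasible tuples `(x₁,x₂)` with `x₁ ≤ x₂`,
equals `⌊m/4⌋ + 1`. -/
theorem feasible_two_count_up_to_swap (m : ℕ) (hm : 0 < m) (hme : Even m) :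
    {x : Fin 2 → ℕ | Feasible 2 m x ∧ x 0 ≤ x 1}.ncard = m / 4 + 1 := by
  obtain ⟨c, hc⟩ := hme
  have hm2 : m = 2 * c := by omega
  have hset : {x : Fin 2 → ℕ | Feasible 2 m x ∧ x 0 ≤ x 1} =
      ↑((Finset.range (m / 4 + 1)).image fun t => ![2 * t, m - 2 * t]) := by
    ext x
    simp only [Set.mem_setOf_eq, Finset.coe_image, Set.mem_image, Finset.mem_coe,
      Finset.mem_range]
    constructor
    · rintro ⟨⟨-, hsum, hdvd, hinj⟩, hle⟩
      rw [Fin.sum_univ_two] at hsum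
      have hne : (altL x 0 : ZMod 2) ≠ (altL x 1 : ZMod 2) := by
        intro h
        exact (by decide : (0 : Fin 2) ≠ 1) (hinj h)
      have hdiff : ((altL x 0 - altL x 1 : ℤ) : ZMod 2) ≠ 0 := by
        push_cast
        intro h
        apply hne
        rw [sub_eq_zero] at h
        exact h
      rw [altL_zero, altL_one] at hdiff
      have : ¬ ((2 : ℤ) ∣ ((x 1 : ℤ) + 1)) := by
        intro h
        apply hdiff
        rw [show (x 0 : ℤ) + 1 - ((x 0 : ℤ) + 1 - ((x 1 : ℤ) + 1)) = (x 1 : ℤ) + 1 by ring]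
        exact (ZMod.intCast_zmod_eq_zero_iff_dvd _ 2).mpr h
      have hx1 : x 1 % 2 = 0 := by omega
      refine ⟨x 0 / 2, by omega, ?_⟩
      have hx0 : x 0 % 2 = 0 := by omega
      funext i
      fin_cases i <;> simp <;> omega
    · rintro ⟨t, ht, rfl⟩
      have h4 : 4 * t ≤ m := by
        have : t ≤ m / 4 := by omega
        omega
      refine ⟨⟨⟨1, rfl⟩, ?_, ?_, ?_⟩, ?_⟩
      · rw [Fin.sum_univ_two]; simp; omega
      · rw [Fin.sum_univ_two]
        simp only [Matrix.cons_val_zero, Matrix.cons_val_one, Matrix.head_cons,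
          Fin.val_zero, Fin.val_one, pow_zero, pow_one, one_mul, neg_one_mul]
        have : ((m - 2 * t : ℕ) : ℤ) = (m : ℤ) - 2 * t := by
          push_cast [Nat.cast_sub (by omega : 2 * t ≤ m)]; ring
        rw [this]
        push_cast
        refine ⟨2 * t - c, by omega⟩
      · intro a b hab
        set v : Fin 2 → ℕ := ![2 * t, m - 2 * t] with hv
        have hsub : altL v 0 - altL v 1 = (v 1 : ℤ) + 1 := by
          rw [altL_zero, altL_one]; ring
        have hv1 : v 1 = m - 2 * t := rfl
        have hodd : ¬ ((2 : ℤ) ∣ ((v 1 : ℤ) + 1)) := by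
          rw [hv1]
          have : ((m - 2 * t : ℕ) : ℤ) = (m : ℤ) - 2 * t := by
            push_cast [Nat.cast_sub (by omega : 2 * t ≤ m)]; ring
          rw [this]
          intro ⟨k, hk⟩
          omega
        have hne : (altL v 0 : ZMod 2) ≠ (altL v 1 : ZMod 2) := by
          intro h
          apply hodd
          rw [← hsub]
          have : ((altL v 0 - altL v 1 : ℤ) : ZMod 2) = 0 := by push_cast [h]; ring
          exact (ZMod.intCast_zmod_eq_zero_iff_dvd _ 2).mp this
        fin_cases a <;> fin_cases b <;> simp_all
      · simp; omega
  rw [hset, Set.ncard_coe_finset]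
  rw [Finset.card_image_of_injective _ ?_, Finset.card_range]
  intro a b hab
  have := congrFun hab 0
  simpa using this
end
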